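/- (Theorem 2(i).) Under assumptions A1 and A2 with parameter θ ≥ 0, if u : S → ℝ is strictly positive and finite and satisfies ∑_{y∈S} B(x,y)·u(y) = λ*·u(x) for every x ∈ S (all series converging), then there exists a constant c > 0 such that u(x) = c·u*(x) for every x ∈ S, where u*(x) = ∑_{n≥1} e^{θn}·f_n(x). -/

import Mathlib

/-- Matrix powers: `B^0 = I`, `B^{n+1}(x,y) = ∑_w B^n(x,w) B(w,y)`. -/
noncomputable def matPow {S : Type*} [DecidableEq S] (B : S → S → ℝ) : ℕ → S → S → ℝ
  | 0 => fun x y => if x = y then (1 : ℝ) else 0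
  | n + 1 => fun x y => ∑' w, matPow B n x w * B w y

/-- First-return quantities: `fret B z n x` is the probability that the killed chain
with sub-stochastic transition matrix `B`, started at `x`, first hits `z` at time `n`
without having been killed: `f_1(x) = B(x,z)`, `f_{n+1}(x) = ∑_{w ≠ z} B(x,w) f_n(w)`.
(The value at `n = 0` is set to `0` by convention.) -/
noncomputable def fret {S : Type*} [DecidableEq S] (B : S → S → ℝ) (z : S) : ℕ → S → ℝ
  | 0 => fun _ => 0
  | 1 => fun x => B x z
  | n + 2 => fun x => ∑' w, if w = z then 0 else B x w * fret B z (n + 1) w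

/-- `grow B z j y` is the probability that the killed chain started at `z` is at `y`
at time `j` without having been killed or having returned to `z`:
`g_0 = δ_z`, and for `j ≥ 1`, `g_j(z) = 0` and `g_j(y) = ∑_x g_{j-1}(x) B(x,y)` for `y ≠ z`. -/
noncomputable def grow {S : Type*} [DecidableEq S] (B : S → S → ℝ) (z : S) : ℕ → S → ℝ
  | 0 => fun y => if y = z then 1 else 0
  | j + 1 => fun y => if y = z then 0 else ∑' x, grow B z j x * B x y

/-- The Perron-Frobenius column eigenvector candidate
`u*(x) = ∑_{n ≥ 1} e^{θ n} f_n(x)`. -/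
noncomputable def uStar {S : Type*} [DecidableEq S] (B : S → S → ℝ) (z : S) (θ : ℝ)
    (x : S) : ℝ :=
  ∑' n : ℕ, Real.exp (θ * ((n : ℝ) + 1)) * fret B z (n + 1) x

/-- The Perron-Frobenius row eigenvector candidate
`η*(y) = ∑_{j ≥ 0} e^{θ j} g_j(y)`. -/
noncomputable def etaStar {S : Type*} [DecidableEq S] (B : S → S → ℝ) (z : S) (θ : ℝ)
    (y : S) : ℝ :=
  ∑' j : ℕ, Real.exp (θ * (j : ℝ)) * grow B z j y

/-!
Removing the column `z` from `B` gives the taboo kernel `Q`, and the eigen-equation reads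
`u = e^θ (B(·,z) u(z) + Q u)`. Iterating this monotone affine map from `0` produces `u(z)` times
the partial sums of the series defining `u*`, so `u(z) u* ≤ u`; in particular `u*` is finite.
A first-step decomposition of `f_{n+1}` together with A1 (`u*(z) = 1`) shows `B u* = λ* u*`.
Hence `r = u - u(z) u*` is a nonnegative `λ*`-eigenfunction with `r(z) = 0`. The eigen-equation
forces `r` to vanish at the head of every edge of `B` leaving a zero of `r`, and irreducibility
carries the zero at `z` to every state.
-/

open Finset

theorem summable_mul_of_le_mul {S : Type*} {B : S → S → ℝ} {u : S → ℝ}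
    (hnn : ∀ x y, 0 ≤ B x y) (husum : ∀ x, Summable fun y => B x y * u y) {g : S → ℝ}
    (hg : ∀ y, 0 ≤ g y) {c : ℝ} (hc : 0 < c) (hgu : ∀ y, c * g y ≤ u y) (x : S) :
    Summable fun y => B x y * g y := by
  refine ((husum x).mul_left c⁻¹).of_nonneg_of_le (fun y => mul_nonneg (hnn x y) (hg y))
    fun y => ?_
  calc B x y * g y ≤ B x y * (c⁻¹ * u y) :=
        mul_le_mul_of_nonneg_left ((le_inv_mul_iff₀ hc).2 (hgu y)) (hnn x y)
    _ = c⁻¹ * (B x y * u y) := by ring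

section Taboo

variable {S : Type*} [DecidableEq S]

def tabooKernel (B : S → S → ℝ) (z : S) (x w : S) : ℝ := if w = z then 0 else B x w

variable {B : S → S → ℝ} {z : S}

theorem tabooKernel_nonneg (hnn : ∀ x y, 0 ≤ B x y) (x w : S) : 0 ≤ tabooKernel B z x w := by
  unfold tabooKernel
  split_ifs
  exacts [le_rfl, hnn x w]

theorem fret_add_two (n : ℕ) (x : S) :
    fret B z (n + 2) x = ∑' w, tabooKernel B z x w * fret B z (n + 1) w := by
  simp only [fret, tabooKernel, ite_mul, zero_mul]

theorem tsum_mul_eq_add_tsum_tabooKernel_mul {x : S} {g : S → ℝ}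
    (hs : Summable fun w => B x w * g w) :
    ∑' w, B x w * g w = B x z * g z + ∑' w, tabooKernel B z x w * g w := by
  simpa only [tabooKernel, ite_mul, zero_mul] using hs.tsum_eq_add_tsum_ite z

theorem Summable.tabooKernel_mul {x : S} {g : S → ℝ} (hs : Summable fun w => B x w * g w) :
    Summable fun w => tabooKernel B z x w * g w := by
  refine (hs.update z 0).congr fun w => ?_
  simp only [Function.update_apply, tabooKernel, ite_mul, zero_mul]

end Taboo

section Irreducible

variable {S : Type*} [DecidableEq S] {B : S → S → ℝ}

theorem of_matPow_ne_zero {P : S → Prop} (hP : ∀ v w, P v → B v w ≠ 0 → P w) {x : S}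
    (hx : P x) : ∀ {n : ℕ} {y : S}, matPow B n x y ≠ 0 → P y
  | 0, y, h => by
    obtain rfl : x = y := by simpa [matPow] using h
    exact hx
  | n + 1, y, h => by
    obtain ⟨w, hw⟩ : ∃ w, matPow B n x w * B w y ≠ 0 := by
      by_contra! h0
      exact h (by simp [matPow, h0])
    exact hP w y (of_matPow_ne_zero hP hx (left_ne_zero_of_mul hw)) (right_ne_zero_of_mul hw)

theorem eq_zero_of_matPow_ne_zero (hnn : ∀ x y, 0 ≤ B x y) {r : S → ℝ}
    (hr : ∀ x, 0 ≤ r x) (hrsum : ∀ x, Summable fun y => B x y * r y) {c : ℝ}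
    (hrsub : ∀ x, ∑' y, B x y * r y ≤ c * r x) {z x : S} (hz : r z = 0) {n : ℕ}
    (hn : matPow B n z x ≠ 0) : r x = 0 := by
  refine of_matPow_ne_zero (P := fun v => r v = 0) (fun v w hv hvw => ?_) hz hn
  have hterms : ∀ y, 0 ≤ B v y * r y := fun y => mul_nonneg (hnn v y) (hr y)
  have hzero : ∑' y, B v y * r y = 0 :=
    le_antisymm (by simpa [hv] using hrsub v) (tsum_nonneg hterms)
  have hvanish := (hasSum_zero_iff_of_nonneg hterms).1 (hzero ▸ (hrsum v).hasSum)
  exact (mul_eq_zero.1 (congrFun hvanish w)).resolve_left hvw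

end Irreducible

section Minimality

variable {S : Type*} [DecidableEq S] {B : S → S → ℝ} {z : S} {θ : ℝ} {u : S → ℝ}

theorem fret_nonneg (hnn : ∀ x y, 0 ≤ B x y) : ∀ n x, 0 ≤ fret B z n x
  | 0, _ => le_rfl
  | 1, x => hnn x z
  | n + 2, x => by
    rw [fret_add_two]
    exact tsum_nonneg fun w =>
      mul_nonneg (tabooKernel_nonneg hnn x w) (fret_nonneg hnn (n + 1) w)

theorem uStar_nonneg (hnn : ∀ x y, 0 ≤ B x y) (x : S) : 0 ≤ uStar B z θ x :=
  tsum_nonneg fun _ => mul_nonneg (Real.exp_pos _).le (fret_nonneg hnn _ x)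

theorem exp_mul_add_tsum_tabooKernel_mul_eq (husum : ∀ x, Summable fun y => B x y * u y)
    (hueig : ∀ x, ∑' y, B x y * u y = Real.exp (-θ) * u x) (x : S) :
    Real.exp θ * (B x z * u z + ∑' w, tabooKernel B z x w * u w) = u x := by
  rw [← tsum_mul_eq_add_tsum_tabooKernel_mul (husum x), hueig, ← mul_assoc, ← Real.exp_add,
    add_neg_cancel, Real.exp_zero, one_mul]

theorem sum_range_succ_exp_mul_fret {n : ℕ} {x : S}
    (hs : ∀ k ∈ range n, Summable fun w => B x w * fret B z (k + 1) w) :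
    ∑ k ∈ range (n + 1), Real.exp (θ * ((k : ℝ) + 1)) * fret B z (k + 1) x =
      Real.exp θ * (B x z + ∑' w, tabooKernel B z x w *
        ∑ k ∈ range n, Real.exp (θ * ((k : ℝ) + 1)) * fret B z (k + 1) w) := by
  have hterm : ∀ k ∈ range n, ∑' w, tabooKernel B z x w *
      (Real.exp (θ * ((k : ℝ) + 1)) * fret B z (k + 1) w) =
        Real.exp (θ * ((k : ℝ) + 1)) * fret B z (k + 2) x := fun k _ => by
    simp_rw [mul_left_comm (tabooKernel B z x _), tsum_mul_left, fret_add_two]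
  have hsum : ∀ k ∈ range n, Summable fun w => tabooKernel B z x w *
      (Real.exp (θ * ((k : ℝ) + 1)) * fret B z (k + 1) w) := fun k hk => by
    simpa only [mul_left_comm (tabooKernel B z x _)] using
      ((hs k hk).tabooKernel_mul).mul_left _
  simp_rw [mul_sum]
  rw [Summable.tsum_finsetSum hsum, sum_congr rfl hterm, sum_range_succ',
    mul_add (Real.exp θ), mul_sum, add_comm]
  congr 1
  · simp [fret]
  · refine sum_congr rfl fun k _ => ?_
    rw [← mul_assoc, ← Real.exp_add]
    congr 2
    push_cast
    ring

variable (hnn : ∀ x y, 0 ≤ B x y) (hupos : ∀ x, 0 < u x)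
  (husum : ∀ x, Summable fun y => B x y * u y)
  (hueig : ∀ x, ∑' y, B x y * u y = Real.exp (-θ) * u x)
include hnn hupos husum hueig

theorem mul_sum_range_exp_mul_fret_le (n : ℕ) (x : S) :
    u z * ∑ k ∈ range n, Real.exp (θ * ((k : ℝ) + 1)) * fret B z (k + 1) x ≤ u x := by
  induction n generalizing x with
  | zero => simpa using (hupos x).le
  | succ n ih =>
    set P : S → ℝ := fun w =>
      ∑ k ∈ range n, Real.exp (θ * ((k : ℝ) + 1)) * fret B z (k + 1) w
    have hterm : ∀ (k : ℕ) w, 0 ≤ Real.exp (θ * ((k : ℝ) + 1)) * fret B z (k + 1) w :=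
      fun k w => mul_nonneg (Real.exp_pos _).le (fret_nonneg hnn _ w)
    have hP : ∀ w, 0 ≤ P w := fun w => sum_nonneg fun k _ => hterm k w
    have hs : ∀ k ∈ range n, Summable fun w => B x w * fret B z (k + 1) w := fun k hk =>
      summable_mul_of_le_mul hnn husum (fret_nonneg hnn _) (mul_pos (hupos z) (Real.exp_pos _))
        (fun w => by
          rw [mul_assoc]
          exact (mul_le_mul_of_nonneg_left (single_le_sum (fun k _ => hterm k w) hk)
            (hupos z).le).trans (ih w)) x
    have hsP : Summable fun w => tabooKernel B z x w * (u z * P w) :=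
      (summable_mul_of_le_mul hnn husum (fun w => mul_nonneg (hupos z).le (hP w)) one_pos
        (by simpa only [one_mul] using ih) x).tabooKernel_mul
    calc u z * ∑ k ∈ range (n + 1), Real.exp (θ * ((k : ℝ) + 1)) * fret B z (k + 1) x
        = Real.exp θ * (B x z * u z + ∑' w, tabooKernel B z x w * (u z * P w)) := by
          simp_rw [sum_range_succ_exp_mul_fret hs, mul_left_comm _ (u z), tsum_mul_left]
          ring
      _ ≤ Real.exp θ * (B x z * u z + ∑' w, tabooKernel B z x w * u w) := by
          gcongr _ * (_ + ?_)
          exact hsP.tsum_le_tsum (fun w => mul_le_mul_of_nonneg_left (ih w)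
            (tabooKernel_nonneg hnn x w)) (husum x).tabooKernel_mul
      _ = u x := exp_mul_add_tsum_tabooKernel_mul_eq husum hueig x

theorem summable_exp_mul_fret (x : S) :
    Summable fun n : ℕ => Real.exp (θ * ((n : ℝ) + 1)) * fret B z (n + 1) x :=
  summable_of_sum_range_le (fun _ => mul_nonneg (Real.exp_pos _).le (fret_nonneg hnn _ x))
    fun n => (le_div_iff₀' (hupos z)).2 (mul_sum_range_exp_mul_fret_le hnn hupos husum hueig n x)

theorem mul_uStar_le (x : S) : u z * uStar B z θ x ≤ u x :=
  (le_div_iff₀' (hupos z)).1 <|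
    (summable_exp_mul_fret hnn hupos husum hueig x).tsum_le_of_sum_range_le fun n =>
      (le_div_iff₀' (hupos z)).2 (mul_sum_range_exp_mul_fret_le hnn hupos husum hueig n x)

theorem summable_mul_exp_mul_fret (n : ℕ) (x : S) :
    Summable fun y => B x y * (Real.exp (θ * ((n : ℝ) + 1)) * fret B z (n + 1) y) := by
  refine summable_mul_of_le_mul hnn husum
    (fun y => mul_nonneg (Real.exp_pos _).le (fret_nonneg hnn _ y)) (hupos z) (fun y => ?_) x
  refine (mul_le_mul_of_nonneg_left ?_ (hupos z).le).trans (mul_uStar_le hnn hupos husum hueig y)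
  exact (summable_exp_mul_fret hnn hupos husum hueig y).le_tsum n
    fun k _ => mul_nonneg (Real.exp_pos _).le (fret_nonneg hnn _ y)

theorem summable_mul_uStar (x : S) : Summable fun y => B x y * uStar B z θ y :=
  summable_mul_of_le_mul hnn husum (uStar_nonneg hnn) (hupos z)
    (mul_uStar_le hnn hupos husum hueig) x

theorem tsum_mul_uStar (x : S) :
    ∑' y, B x y * uStar B z θ y =
      ∑' n : ℕ, ∑' y, B x y * (Real.exp (θ * ((n : ℝ) + 1)) * fret B z (n + 1) y) := by
  set g : S → ℕ → ℝ := fun y n =>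
    B x y * (Real.exp (θ * ((n : ℝ) + 1)) * fret B z (n + 1) y)
  have hrow : ∀ y, Summable (g y) :=
    fun y => (summable_exp_mul_fret hnn hupos husum hueig y).mul_left _
  have hrowsum : Summable fun y => ∑' n, g y n := by
    simpa only [g, tsum_mul_left, uStar] using summable_mul_uStar hnn hupos husum hueig x
  have hg : Summable (Function.uncurry g) :=
    (summable_prod_of_nonneg fun p => mul_nonneg (hnn x p.1)
      (mul_nonneg (Real.exp_pos _).le (fret_nonneg hnn _ p.1))).2 ⟨hrow, hrowsum⟩
  simp_rw [uStar, ← tsum_mul_left]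
  exact (hg.tsum_comm' hrow (summable_mul_exp_mul_fret hnn hupos husum hueig · x)).symm

theorem tsum_mul_exp_mul_fret (n : ℕ) (x : S) :
    ∑' y, B x y * (Real.exp (θ * ((n : ℝ) + 1)) * fret B z (n + 1) y) =
      B x z * (Real.exp (θ * ((n : ℝ) + 1)) * fret B z (n + 1) z) +
        Real.exp (-θ) * (Real.exp (θ * (((n + 1 : ℕ) : ℝ) + 1)) * fret B z (n + 2) x) := by
  rw [tsum_mul_eq_add_tsum_tabooKernel_mul (z := z)
    (summable_mul_exp_mul_fret hnn hupos husum hueig n x)]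
  simp_rw [mul_left_comm (tabooKernel B z x _), tsum_mul_left, ← fret_add_two, ← mul_assoc,
    ← Real.exp_add]
  congr 3
  push_cast
  ring

theorem tsum_mul_uStar_eq (hA1 : uStar B z θ z = 1) (x : S) :
    ∑' y, B x y * uStar B z θ y = Real.exp (-θ) * uStar B z θ x := by
  have hx := summable_exp_mul_fret (z := z) hnn hupos husum hueig x
  rw [tsum_mul_uStar hnn hupos husum hueig,
    tsum_congr (tsum_mul_exp_mul_fret hnn hupos husum hueig · x),
    Summable.tsum_add ((summable_exp_mul_fret hnn hupos husum hueig z).mul_left _)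
      (((summable_nat_add_iff 1).2 hx).mul_left _),
    tsum_mul_left, tsum_mul_left]
  rw [uStar] at hA1 ⊢
  rw [hA1, hx.tsum_eq_zero_add]
  simp only [fret, CharP.cast_eq_zero, zero_add, mul_one, mul_add, ← mul_assoc, ← Real.exp_add,
    neg_add_cancel, Real.exp_zero, one_mul]

end Minimality

theorem stmt6_general {S : Type*} [DecidableEq S]
    (B : S → S → ℝ)
    (hnn : ∀ x y, 0 ≤ B x y)
    (hirr : ∀ x y, ∃ n, 1 ≤ n ∧ 0 < matPow B n x y)
    (z : S) (θ : ℝ)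
    (hA1 : ∑' n : ℕ, Real.exp (θ * ((n : ℝ) + 1)) * fret B z (n + 1) z = 1)
    (u : S → ℝ) (hupos : ∀ x, 0 < u x)
    (husum : ∀ x, Summable (fun y => B x y * u y))
    (hueig : ∀ x, ∑' y, B x y * u y = Real.exp (-θ) * u x) :
    ∃ c : ℝ, 0 < c ∧ ∀ x, u x = c * uStar B z θ x := by
  set r : S → ℝ := fun x => u x - u z * uStar B z θ x
  have hr : ∀ x, 0 ≤ r x := fun x => sub_nonneg.2 (mul_uStar_le hnn hupos husum hueig x)
  have hrz : r z = 0 := by simp only [r, show uStar B z θ z = 1 from hA1, mul_one, sub_self]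
  have huStar := summable_mul_uStar (z := z) hnn hupos husum hueig
  have hrsum : ∀ x, Summable fun y => B x y * r y := fun x => by
    simpa only [r, mul_sub, mul_left_comm (B x _)] using (husum x).sub ((huStar x).mul_left (u z))
  have hreig : ∀ x, ∑' y, B x y * r y = Real.exp (-θ) * r x := fun x => by
    simp only [r, mul_sub, mul_left_comm (B x _)]
    rw [(husum x).tsum_sub ((huStar x).mul_left _), tsum_mul_left, hueig,
      tsum_mul_uStar_eq hnn hupos husum hueig hA1]
    ring
  refine ⟨u z, hupos z, fun x => ?_⟩
  obtain ⟨n, -, hn⟩ := hirr z x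
  have hrx := eq_zero_of_matPow_ne_zero hnn hr hrsum (fun x => (hreig x).le) hrz hn.ne'
  exact sub_eq_zero.1 hrx

/-- Theorem 2(i): under A1 and A2, any strictly positive finite column eigenvector
of `B` with eigenvalue `λ* = e^{-θ}` is a positive multiple of `u*`. -/
theorem stmt6 {S : Type*} [Countable S] [Nonempty S] [DecidableEq S]
    (B : S → S → ℝ)
    (hnn : ∀ x y, 0 ≤ B x y)
    (hrow : ∀ x, Summable (fun y => B x y))
    (hsub : ∀ x, ∑' y, B x y ≤ 1)
    (hirr : ∀ x y, ∃ n, 1 ≤ n ∧ 0 < matPow B n x y)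
    (z : S) (θ : ℝ) (hθ : 0 ≤ θ)
    (hA1 : ∑' n : ℕ, Real.exp (θ * ((n : ℝ) + 1)) * fret B z (n + 1) z = 1)
    (hA2 : Summable (fun n : ℕ =>
      ((n : ℝ) + 1) * Real.exp (θ * ((n : ℝ) + 1)) * fret B z (n + 1) z))
    (u : S → ℝ) (hupos : ∀ x, 0 < u x)
    (husum : ∀ x, Summable (fun y => B x y * u y))
    (hueig : ∀ x, ∑' y, B x y * u y = Real.exp (-θ) * u x) :
    ∃ c : ℝ, 0 < c ∧ ∀ x, u x = c * uStar B z θ x :=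
  stmt6_general B hnn hirr z θ hA1 u hupos husum hueig
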